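/- arXiv:math/0311280 — 3 statements merged into one kernel-verified Lean document; each statement's English description precedes it below -/
import Mathlib

section
/- Let ε ≥ 0 be a real number. For any complex ν with |Im(ν)| ≤ ε and any complex z with Re(z) > 2ε², the principal-branch square root satisfies Re(√(2z + ν²)) > |Re(ν)|. -/
/-- `Re √w = √((‖w‖ + Re w) / 2) ≥ √(Re w)`. -/
theorem Complex.abs_lt_re_cpow_inv_two {w : ℂ} {a : ℝ} (h : a ^ 2 < w.re) :
    |a| < (w ^ (2⁻¹ : ℂ)).re := by
  rw [Complex.cpow_inv_two_re, ← Real.sqrt_sq_eq_abs]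
  have hle : w.re ≤ ‖w‖ := Complex.re_le_norm w
  exact Real.sqrt_lt_sqrt (sq_nonneg a) (by linarith)

theorem re_sqrt_gt_abs_re_general (ε : ℝ) (ν z : ℂ)
    (hν : |ν.im| ≤ ε) (hz : 2 * ε ^ 2 < z.re) :
    |ν.re| < ((2 * z + ν ^ 2) ^ ((1 : ℂ) / 2)).re := by
  have him : ν.im ^ 2 ≤ ε ^ 2 := by
    simpa only [sq_abs] using pow_le_pow_left₀ (abs_nonneg ν.im) hν 2
  have hre : (2 * z + ν ^ 2).re = 2 * z.re + ν.re ^ 2 - ν.im ^ 2 := by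
    simp only [sq, Complex.add_re, Complex.mul_re, Complex.re_ofNat, Complex.im_ofNat, zero_mul,
      sub_zero]
    ring
  rw [one_div]
  exact Complex.abs_lt_re_cpow_inv_two (by linarith [sq_nonneg ε])

theorem re_sqrt_gt_abs_re (ε : ℝ) (hε : 0 ≤ ε) (ν z : ℂ)
    (hν : |ν.im| ≤ ε) (hz : 2 * ε ^ 2 < z.re) :
    |ν.re| < ((2 * z + ν ^ 2) ^ ((1 : ℂ) / 2)).re :=
  re_sqrt_gt_abs_re_general ε ν z hν hz
end

section
/- Let ε ≥ 0, a > 0 be real, ν complex with |Im(ν)| ≤ ε, and z complex with Re(z) > 2ε². Then the integral D_ν(a,z) = (e^{-1/(2a)}/a) ∫_0^∞ e^{-x²/(2a)} x^{ν+3} I_μ(x/a) dx, with μ = √(2z+ν²) (principal branch), is finite (absolutely convergent). -/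
/-! Comparing the Bessel series term by term with that of `cosh`, via
`‖Γ(μ + 1 + n)‖ ≥ ‖Γ(μ + 1)‖ n!` and `(2n)! ≤ 4ⁿ (n!)²`, gives
`‖I_μ(ξ)‖ ≤ C (|ξ|/2)^(Re μ) cosh ξ` whenever `Re μ ≥ 0`. Completing the square,
`-x²/(2a) + x/a ≤ 1/a - x²/(4a)`, so for `x > 0` the integrand is dominated by a multiple of
`x^(Re s + Re μ) e^(-x²/(4a))`, integrable on `(0, ∞)` once `Re s + Re μ > -1`.
For `s = ν + 3` and `μ = √(2z + ν²)` this follows from `Re μ > |Re ν|`: indeed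
`Re √w = √((‖w‖ + Re w)/2) ≥ √(Re w)`, and `Re (2z + ν²) > (Re ν)²`
since `(Im ν)² ≤ ε² < Re z / 2`. -/

open MeasureTheory

/-- Modified Bessel function of the first kind of complex order `μ`,
defined by its series for positive real arguments. -/
noncomputable def besselI (μ : ℂ) (ξ : ℝ) : ℂ :=
  ∑' n : ℕ, ((ξ : ℂ) / 2) ^ (μ + 2 * (n : ℂ)) /
    ((n.factorial : ℂ) * Complex.Gamma (μ + 1 + (n : ℂ)))

open Real Set Nat

lemma Nat.factorial_two_mul_le_four_pow_mul_factorial_sq (n : ℕ) :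
    (2 * n)! ≤ 4 ^ n * n ! ^ 2 := by
  calc (2 * n)! = centralBinom n * n ! ^ 2 := by
        rw [centralBinom_eq_two_mul_choose, sq, ← mul_assoc,
          ← choose_mul_factorial_mul_factorial (show n ≤ 2 * n by omega),
          show 2 * n - n = n by omega]
    _ ≤ 4 ^ n * n ! ^ 2 := Nat.mul_le_mul_right _ (centralBinom_le_four_pow n)

lemma Complex.norm_cpow_le_rpow_mul_exp (z w : ℂ) :
    ‖z ^ w‖ ≤ ‖z‖ ^ w.re * Real.exp (π * |w.im|) := by
  refine (norm_cpow_le z w).trans ?_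
  rw [div_eq_mul_inv, ← Real.exp_neg]
  gcongr
  calc -(arg z * w.im) ≤ |arg z| * |w.im| := by rw [← abs_mul]; exact neg_le_abs _
    _ ≤ π * |w.im| := by gcongr; exact abs_arg_le_pi z

lemma Complex.norm_Gamma_mul_factorial_le {μ : ℂ} (hμ : 0 ≤ μ.re) (n : ℕ) :
    ‖Gamma (μ + 1)‖ * n ! ≤ ‖Gamma (μ + 1 + n)‖ := by
  induction n with
  | zero => simp
  | succ n ih =>
    have hre : (n : ℝ) + 1 ≤ (μ + 1 + n).re := by simp; linarith
    have hne : μ + 1 + n ≠ 0 := fun h => by simp [h] at hre; linarith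
    calc ‖Gamma (μ + 1)‖ * (n + 1)! = (n + 1) * (‖Gamma (μ + 1)‖ * n !) := by
          push_cast [Nat.factorial_succ]; ring
      _ ≤ ‖μ + 1 + n‖ * ‖Gamma (μ + 1 + n)‖ := by
          gcongr
          exact hre.trans (re_le_norm _)
      _ = ‖Gamma (μ + 1 + (n + 1 : ℕ))‖ := by
          rw [← norm_mul, ← Gamma_add_one _ hne]; push_cast; ring_nf

lemma Complex.abs_lt_re_cpow_half {w : ℂ} {t : ℝ} (h : t ^ 2 < w.re) :
    |t| < (w ^ (1 / 2 : ℂ)).re := by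
  rw [one_div, cpow_inv_two_re]
  calc |t| = √(t ^ 2) := (sqrt_sq_eq_abs t).symm
    _ < √w.re := Real.sqrt_lt_sqrt (sq_nonneg _) h
    _ ≤ √((‖w‖ + w.re) / 2) := Real.sqrt_le_sqrt (by linarith [re_le_norm w])

lemma neg_sq_div_add_div_le {a : ℝ} (ha : 0 < a) (x : ℝ) :
    -x ^ 2 / (2 * a) + x / a ≤ a⁻¹ + -(1 / (4 * a)) * x ^ 2 := by
  have := sq_nonneg (x - 2)
  field_simp
  nlinarith

noncomputable def besselITerm (μ : ℂ) (ξ : ℝ) (n : ℕ) : ℂ :=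
  ((ξ : ℂ) / 2) ^ (μ + 2 * (n : ℂ)) /
    ((n.factorial : ℂ) * Complex.Gamma (μ + 1 + (n : ℂ)))

section besselI

variable {μ : ℂ}

lemma norm_besselITerm_le (hμ : 0 ≤ μ.re) (ξ : ℝ) (n : ℕ) :
    ‖besselITerm μ ξ n‖ ≤
      Real.exp (π * |μ.im|) / ‖Complex.Gamma (μ + 1)‖ * (|ξ| / 2) ^ μ.re *
        (|ξ| ^ (2 * n) / (2 * n)!) := by
  have hG : 0 < ‖Complex.Gamma (μ + 1)‖ :=
    norm_pos_iff.mpr (Complex.Gamma_ne_zero_of_re_pos (by simp; linarith))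
  have hnum : ‖((ξ : ℂ) / 2) ^ (μ + 2 * n)‖ ≤
      (|ξ| / 2) ^ μ.re * (|ξ| ^ (2 * n) / 4 ^ n) * Real.exp (π * |μ.im|) := by
    refine (Complex.norm_cpow_le_rpow_mul_exp _ _).trans_eq ?_
    have hre : (μ + 2 * n).re = μ.re + (2 * n : ℕ) := by simp
    rw [hre, show (μ + 2 * n).im = μ.im by simp, norm_div, Complex.norm_real, Complex.norm_two,
      Real.norm_eq_abs, rpow_add_of_nonneg (by positivity) hμ (by positivity), rpow_natCast,
      div_pow, pow_mul (2 : ℝ) 2 n]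
    norm_num
  have hden : (n ! : ℝ) * (‖Complex.Gamma (μ + 1)‖ * n !) ≤
      ‖(n ! : ℂ) * Complex.Gamma (μ + 1 + n)‖ := by
    rw [norm_mul, Complex.norm_natCast]
    gcongr
    exact Complex.norm_Gamma_mul_factorial_le hμ n
  have hfact : ((2 * n)! : ℝ) ≤ 4 ^ n * n ! ^ 2 := by
    exact_mod_cast factorial_two_mul_le_four_pow_mul_factorial_sq n
  calc ‖besselITerm μ ξ n‖
      ≤ (|ξ| / 2) ^ μ.re * (|ξ| ^ (2 * n) / 4 ^ n) * Real.exp (π * |μ.im|) /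
          (n ! * (‖Complex.Gamma (μ + 1)‖ * n !)) := by
        rw [besselITerm, norm_div]
        exact div_le_div₀ (by positivity) hnum (by positivity) hden
    _ = Real.exp (π * |μ.im|) / ‖Complex.Gamma (μ + 1)‖ * (|ξ| / 2) ^ μ.re *
          (|ξ| ^ (2 * n) / (4 ^ n * n ! ^ 2)) := by
        field_simp
    _ ≤ _ := by gcongr

lemma summable_norm_besselITerm (hμ : 0 ≤ μ.re) (ξ : ℝ) :
    Summable fun n => ‖besselITerm μ ξ n‖ :=
  .of_nonneg_of_le (fun _ => norm_nonneg _) (norm_besselITerm_le hμ ξ)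
    ((Real.hasSum_cosh |ξ|).summable.mul_left _)

lemma norm_besselI_le (hμ : 0 ≤ μ.re) (ξ : ℝ) :
    ‖besselI μ ξ‖ ≤
      Real.exp (π * |μ.im|) / ‖Complex.Gamma (μ + 1)‖ * (|ξ| / 2) ^ μ.re * cosh ξ := by
  rw [← cosh_abs, ← (Real.hasSum_cosh |ξ|).tsum_eq, ← tsum_mul_left]
  exact (norm_tsum_le_tsum_norm (summable_norm_besselITerm hμ ξ)).trans
    ((summable_norm_besselITerm hμ ξ).tsum_le_tsum (norm_besselITerm_le hμ ξ)
      ((Real.hasSum_cosh |ξ|).summable.mul_left _))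

lemma measurable_besselI (hμ : 0 ≤ μ.re) : Measurable (besselI μ) :=
  measurable_of_tendsto_metrizable (f := fun N ξ => ∑ n ∈ Finset.range N, besselITerm μ ξ n)
    (fun N => Finset.measurable_sum _ fun n _ => by unfold besselITerm; fun_prop)
    (tendsto_pi_nhds.2 fun ξ =>
      (summable_norm_besselITerm hμ ξ).of_norm.hasSum.tendsto_sum_nat)

end besselI

section weber

variable {a : ℝ} {s μ : ℂ}

lemma norm_gaussian_mul_cpow_mul_besselI_le (ha : 0 < a) (hμ : 0 ≤ μ.re) {x : ℝ}
    (hx : 0 < x) :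
    ‖(Real.exp (-x ^ 2 / (2 * a)) : ℂ) * (x : ℂ) ^ s * besselI μ (x / a)‖ ≤
      Real.exp (π * |μ.im|) / ‖Complex.Gamma (μ + 1)‖ * (2 * a)⁻¹ ^ μ.re * Real.exp a⁻¹ *
        (x ^ (s.re + μ.re) * Real.exp (-(1 / (4 * a)) * x ^ 2)) := by
  set K := Real.exp (π * |μ.im|) / ‖Complex.Gamma (μ + 1)‖
  have hxa : 0 < x / a := by positivity
  have hbessel : ‖besselI μ (x / a)‖ ≤ K * (x / a / 2) ^ μ.re * Real.exp (x / a) := by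
    refine (norm_besselI_le hμ (x / a)).trans ?_
    rw [abs_of_pos hxa, cosh_eq]
    gcongr
    linarith [exp_le_exp.2 (show -(x / a) ≤ x / a by linarith)]
  calc ‖(Real.exp (-x ^ 2 / (2 * a)) : ℂ) * (x : ℂ) ^ s * besselI μ (x / a)‖
      = Real.exp (-x ^ 2 / (2 * a)) * x ^ s.re * ‖besselI μ (x / a)‖ := by
        rw [norm_mul, norm_mul, Complex.norm_real, Real.norm_of_nonneg (exp_pos _).le,
          Complex.norm_cpow_eq_rpow_re_of_pos hx]
    _ ≤ Real.exp (-x ^ 2 / (2 * a)) * x ^ s.re *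
          (K * (x / a / 2) ^ μ.re * Real.exp (x / a)) := by
        gcongr
    _ = K * (2 * a)⁻¹ ^ μ.re * (x ^ s.re * x ^ μ.re) *
          Real.exp (-x ^ 2 / (2 * a) + x / a) := by
        rw [exp_add, show x / a / 2 = x * (2 * a)⁻¹ by field_simp,
          mul_rpow hx.le (by positivity)]
        ring
    _ ≤ K * (2 * a)⁻¹ ^ μ.re * (x ^ s.re * x ^ μ.re) *
          Real.exp (a⁻¹ + -(1 / (4 * a)) * x ^ 2) := by
        gcongr _ * Real.exp ?_
        exact neg_sq_div_add_div_le ha x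
    _ = _ := by
        rw [exp_add, ← rpow_add hx]
        ring

theorem integrableOn_gaussian_mul_cpow_mul_besselI (ha : 0 < a) (hμ : 0 ≤ μ.re)
    (hs : -1 < s.re + μ.re) :
    IntegrableOn
      (fun x : ℝ => (Real.exp (-x ^ 2 / (2 * a)) : ℂ) * (x : ℂ) ^ s * besselI μ (x / a))
      (Ioi 0) := by
  have hI := measurable_besselI hμ
  exact Integrable.mono' ((integrable_rpow_mul_exp_neg_mul_sq (b := 1 / (4 * a))
      (by positivity) hs).const_mul _).integrableOn
    (by fun_prop : Measurable _).aestronglyMeasurable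
    (ae_restrict_of_forall_mem measurableSet_Ioi fun _ hx =>
      norm_gaussian_mul_cpow_mul_besselI_le ha hμ hx)

end weber

theorem integrable_weber_integrand_general (ε a : ℝ) (ha : 0 < a)
    (ν z : ℂ) (hν : |ν.im| ≤ ε) (hz : 2 * ε ^ 2 < z.re) :
    IntegrableOn
      (fun x : ℝ => (Real.exp (-x ^ 2 / (2 * a)) : ℂ) * (x : ℂ) ^ (ν + 3) *
        besselI ((2 * z + ν ^ 2) ^ ((1 : ℂ) / 2)) (x / a))
      (Set.Ioi 0) := by
  have hνim : ν.im ^ 2 ≤ ε ^ 2 := by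
    simpa only [sq_abs] using pow_le_pow_left₀ (abs_nonneg _) hν 2
  have hre : ν.re ^ 2 < (2 * z + ν ^ 2).re := by
    simp only [Complex.add_re, Complex.mul_re, sq, Complex.re_ofNat, Complex.im_ofNat]
    nlinarith
  have hμ := Complex.abs_lt_re_cpow_half hre
  refine integrableOn_gaussian_mul_cpow_mul_besselI ha (by linarith [abs_nonneg ν.re]) ?_
  simp only [Complex.add_re, Complex.re_ofNat]
  linarith [neg_abs_le ν.re]

theorem integrable_weber_integrand (ε a : ℝ) (hε : 0 ≤ ε) (ha : 0 < a)
    (ν z : ℂ) (hν : |ν.im| ≤ ε) (hz : 2 * ε ^ 2 < z.re) :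
    IntegrableOn
      (fun x : ℝ => (Real.exp (-x ^ 2 / (2 * a)) : ℂ) * (x : ℂ) ^ (ν + 3) *
        besselI ((2 * z + ν ^ 2) ^ ((1 : ℂ) / 2)) (x / a))
      (Set.Ioi 0) :=
  integrable_weber_integrand_general ε a ha ν z hν hz
end

section
/- For any x > 0, a > 0, and complex ν, the extension L(x,ν) of ν ↦ E[(A^{(ν)}_x - a)^+] satisfies the bound |L(x,ν)| ≤ e^{(x/2)·Im(ν)²} · E[A^{(Re ν)}_x]. -/
open MeasureTheory ProbabilityTheory

/-- A standard Brownian motion: jointly measurable, starts at `0`, has centered Gaussian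
increments of the correct variance, independent increments, and continuous paths. -/
structure IsBrownianMotion {Ω : Type*} [MeasurableSpace Ω] (P : Measure Ω)
    (W : ℝ → Ω → ℝ) : Prop where
  measurable : Measurable fun p : ℝ × Ω => W p.1 p.2
  init : ∀ᵐ ω ∂P, W 0 ω = 0
  incr_law : ∀ s t : ℝ, 0 ≤ s → s ≤ t →
    P.map (fun ω => W t ω - W s ω) = gaussianReal 0 (Real.toNNReal (t - s))
  indep_incr : ∀ (n : ℕ) (t : Fin (n + 1) → ℝ), Monotone t →
    iIndepFun
      (fun i : Fin n => fun ω => W (t i.succ) ω - W (t i.castSucc) ω) P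
  cont : ∀ᵐ ω ∂P, Continuous fun u : ℝ => W u ω

open scoped NNReal

/-!
Taking absolute values inside the expectation and using `(A^{(0)}_x - a)^+ ≤ A^{(0)}_x`, it
suffices to show `E[A^{(0)}_x e^{r W_x}] = e^{r² x / 2} E[A^{(r)}_x]` with `r = Re ν`. By Tonelli
this reduces to `E[e^{2 W_w} e^{r W_x}] = e^{r² x / 2} E[e^{2 (W_w + r w)}]` for `0 < w ≤ x`: write
`2 W_w + r W_x = (2 + r) W_w + r (W_x - W_w)`, a sum of independent centred Gaussians, and compare
both sides through the Gaussian moment generating function.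
-/

theorem norm_exp_neg_mul_sq_div_two (x : ℝ) (ν : ℂ) :
    ‖Complex.exp (-(x : ℂ) * ν ^ 2 / 2)‖ = Real.exp ((x / 2) * ν.im ^ 2 - ν.re ^ 2 * x / 2) := by
  rw [Complex.norm_exp]
  congr 1
  simp [pow_two]
  ring

theorem lintegral_ofReal_exp_mul_gaussianReal (c : ℝ) (v : ℝ≥0) :
    ∫⁻ y, ENNReal.ofReal (Real.exp (c * y)) ∂gaussianReal 0 v
      = ENNReal.ofReal (Real.exp (v * c ^ 2 / 2)) := by
  rw [← ofReal_integral_eq_lintegral_ofReal (integrable_exp_mul_gaussianReal c)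
    (ae_of_all _ fun _ => (Real.exp_pos _).le)]
  congr 1
  simpa [mgf] using congrFun (mgf_id_gaussianReal (μ := 0) (v := v)) c

theorem lintegral_ofReal_setIntegral_Ioc {Ω : Type*} [MeasurableSpace Ω] {P : Measure Ω}
    [SFinite P] {g : ℝ → Ω → ℝ} (hg : Measurable fun p : Ω × ℝ => g p.2 p.1)
    (hcont : ∀ᵐ ω ∂P, Continuous fun w => g w ω) (hnonneg : ∀ w ω, 0 ≤ g w ω) (a b : ℝ) :
    ∫⁻ ω, ENNReal.ofReal (∫ w in Set.Ioc a b, g w ω) ∂P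
      = ∫⁻ w in Set.Ioc a b, ∫⁻ ω, ENNReal.ofReal (g w ω) ∂P := by
  rw [← lintegral_lintegral_swap hg.ennreal_ofReal.aemeasurable]
  refine lintegral_congr_ae ?_
  filter_upwards [hcont] with ω hω
  exact ofReal_integral_eq_lintegral_ofReal
    (hω.integrableOn_Icc.mono_set Set.Ioc_subset_Icc_self) (ae_of_all _ fun w => hnonneg w ω)

/-- The exponential functional `A^{(ν)}_x = ∫_0^x exp (2 (W_w + ν w)) dw` of the path `W · ω`. -/
noncomputable def expFunctional {Ω : Type*} (W : ℝ → Ω → ℝ) (ν x : ℝ) (ω : Ω) : ℝ :=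
  ∫ w in Set.Ioc 0 x, Real.exp (2 * (W w ω + ν * w))

theorem expFunctional_nonneg {Ω : Type*} (W : ℝ → Ω → ℝ) (ν x : ℝ) (ω : Ω) :
    0 ≤ expFunctional W ν x ω :=
  integral_nonneg fun _ => Real.exp_nonneg _

namespace IsBrownianMotion

variable {Ω : Type*} [MeasurableSpace Ω] {P : Measure Ω} {W : ℝ → Ω → ℝ}

theorem measurable_apply (hW : IsBrownianMotion P W) (t : ℝ) : Measurable (W t) :=
  hW.measurable.comp (measurable_const.prodMk measurable_id)

theorem measurable_uncurry_swap (hW : IsBrownianMotion P W) :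
    Measurable fun p : Ω × ℝ => W p.2 p.1 :=
  hW.measurable.comp measurable_swap

theorem lintegral_exp_mul_sub (hW : IsBrownianMotion P W) {s t : ℝ} (hs : 0 ≤ s) (hst : s ≤ t)
    (c : ℝ) :
    ∫⁻ ω, ENNReal.ofReal (Real.exp (c * (W t ω - W s ω))) ∂P
      = ENNReal.ofReal (Real.exp (c ^ 2 * (t - s) / 2)) := by
  have hmeas : Measurable fun y : ℝ => ENNReal.ofReal (Real.exp (c * y)) := by fun_prop
  have hincr : Measurable fun ω => W t ω - W s ω :=
    (hW.measurable_apply t).sub (hW.measurable_apply s)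
  rw [← lintegral_map hmeas hincr,
    hW.incr_law s t hs hst, lintegral_ofReal_exp_mul_gaussianReal,
    Real.coe_toNNReal _ (sub_nonneg.2 hst), mul_comm]

theorem indepFun_sub_sub (hW : IsBrownianMotion P W) {s t u : ℝ} (hst : s ≤ t) (htu : t ≤ u) :
    IndepFun (fun ω => W t ω - W s ω) (fun ω => W u ω - W t ω) P := by
  have hmono : Monotone ![s, t, u] := by
    simp [Fin.monotone_iff_le_succ, Fin.forall_fin_succ, hst, htu]
  simpa [Fin.succ, Fin.castSucc] using
    (hW.indep_incr 2 ![s, t, u] hmono).indepFun (i := 0) (j := 1) (by decide)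

theorem lintegral_exp_mul_add_drift (hW : IsBrownianMotion P W) {w : ℝ} (hw : 0 ≤ w) (c r : ℝ) :
    ∫⁻ ω, ENNReal.ofReal (Real.exp (c * (W w ω + r * w))) ∂P
      = ENNReal.ofReal (Real.exp (c ^ 2 * w / 2 + c * r * w)) := by
  calc ∫⁻ ω, ENNReal.ofReal (Real.exp (c * (W w ω + r * w))) ∂P
      = ∫⁻ ω, ENNReal.ofReal (Real.exp (c * r * w))
          * ENNReal.ofReal (Real.exp (c * (W w ω - W 0 ω))) ∂P := by
        refine lintegral_congr_ae ?_
        filter_upwards [hW.init] with ω h0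
        rw [← ENNReal.ofReal_mul (Real.exp_nonneg _), ← Real.exp_add, h0]
        ring_nf
    _ = _ := by
        rw [lintegral_const_mul' _ _ ENNReal.ofReal_ne_top, hW.lintegral_exp_mul_sub le_rfl hw,
          ← ENNReal.ofReal_mul (Real.exp_nonneg _), ← Real.exp_add]
        ring_nf

/-- Girsanov's theorem for the one-dimensional marginals `W_w`, `w ≤ x`: weighting by
`exp (r W_x)` adds the drift `r`, at the price of the factor `exp (r² x / 2)`. -/
theorem lintegral_exp_mul_mul_exp_eq (hW : IsBrownianMotion P W) {w x : ℝ} (hw : 0 ≤ w)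
    (hwx : w ≤ x) (c r : ℝ) :
    ∫⁻ ω, ENNReal.ofReal (Real.exp (c * W w ω) * Real.exp (r * W x ω)) ∂P
      = ENNReal.ofReal (Real.exp (r ^ 2 * x / 2))
          * ∫⁻ ω, ENNReal.ofReal (Real.exp (c * (W w ω + r * w))) ∂P := by
  have hexp (k : ℝ) : Measurable fun y : ℝ => ENNReal.ofReal (Real.exp (k * y)) := by fun_prop
  calc ∫⁻ ω, ENNReal.ofReal (Real.exp (c * W w ω) * Real.exp (r * W x ω)) ∂P
      = ∫⁻ ω, ENNReal.ofReal (Real.exp ((c + r) * (W w ω - W 0 ω)))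
          * ENNReal.ofReal (Real.exp (r * (W x ω - W w ω))) ∂P := by
        refine lintegral_congr_ae ?_
        filter_upwards [hW.init] with ω h0
        rw [← ENNReal.ofReal_mul (Real.exp_nonneg _), ← Real.exp_add, ← Real.exp_add, h0]
        ring_nf
    _ = (∫⁻ ω, ENNReal.ofReal (Real.exp ((c + r) * (W w ω - W 0 ω))) ∂P)
          * ∫⁻ ω, ENNReal.ofReal (Real.exp (r * (W x ω - W w ω))) ∂P := by
        exact lintegral_mul_eq_lintegral_mul_lintegral_of_indepFun''
          ((hexp _).comp ((hW.measurable_apply w).sub (hW.measurable_apply 0))).aemeasurable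
          ((hexp _).comp ((hW.measurable_apply x).sub (hW.measurable_apply w))).aemeasurable
          ((hW.indepFun_sub_sub hw hwx).comp (hexp _) (hexp _))
    _ = _ := by
        rw [hW.lintegral_exp_mul_sub le_rfl hw, hW.lintegral_exp_mul_sub hw hwx,
          hW.lintegral_exp_mul_add_drift hw, ← ENNReal.ofReal_mul (Real.exp_nonneg _),
          ← ENNReal.ofReal_mul (Real.exp_nonneg _), ← Real.exp_add, ← Real.exp_add]
        ring_nf

theorem measurable_uncurry_exp_two_mul_add (hW : IsBrownianMotion P W) (ν : ℝ) :
    Measurable fun p : Ω × ℝ => Real.exp (2 * (W p.2 p.1 + ν * p.2)) :=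
  ((hW.measurable_uncurry_swap.add (measurable_snd.const_mul ν)).const_mul 2).exp

theorem measurable_expFunctional (hW : IsBrownianMotion P W) (ν x : ℝ) :
    Measurable (expFunctional W ν x) :=
  (hW.measurable_uncurry_exp_two_mul_add ν).stronglyMeasurable.integral_prod_right'.measurable

theorem lintegral_ofReal_expFunctional [SFinite P] (hW : IsBrownianMotion P W) (ν x : ℝ) :
    ∫⁻ ω, ENNReal.ofReal (expFunctional W ν x ω) ∂P
      = ∫⁻ w in Set.Ioc 0 x, ∫⁻ ω, ENNReal.ofReal (Real.exp (2 * (W w ω + ν * w))) ∂P :=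
  lintegral_ofReal_setIntegral_Ioc (hW.measurable_uncurry_exp_two_mul_add ν)
    (hW.cont.mono fun ω hω => by fun_prop) (fun _ _ => Real.exp_nonneg _) 0 x

theorem lintegral_ofReal_expFunctional_lt_top [SFinite P] (hW : IsBrownianMotion P W)
    (ν x : ℝ) : ∫⁻ ω, ENNReal.ofReal (expFunctional W ν x ω) ∂P < ⊤ := by
  rw [hW.lintegral_ofReal_expFunctional, setLIntegral_congr_fun measurableSet_Ioc fun w hw =>
    hW.lintegral_exp_mul_add_drift hw.1.le 2 ν]
  exact ((by fun_prop : Continuous fun w : ℝ => Real.exp (2 ^ 2 * w / 2 + 2 * ν * w))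
    |>.integrableOn_Icc.mono_set Set.Ioc_subset_Icc_self).lintegral_lt_top

theorem lintegral_ofReal_expFunctional_zero_mul_exp [SFinite P] (hW : IsBrownianMotion P W)
    (x r : ℝ) :
    ∫⁻ ω, ENNReal.ofReal (expFunctional W 0 x ω * Real.exp (r * W x ω)) ∂P
      = ENNReal.ofReal (Real.exp (r ^ 2 * x / 2))
          * ∫⁻ ω, ENNReal.ofReal (expFunctional W r x ω) ∂P := by
  have hweighted : ∀ ω, expFunctional W 0 x ω * Real.exp (r * W x ω)
      = ∫ w in Set.Ioc 0 x, Real.exp (2 * W w ω) * Real.exp (r * W x ω) := fun ω => by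
    simp [expFunctional, integral_mul_const]
  simp_rw [hweighted]
  rw [lintegral_ofReal_setIntegral_Ioc
      ((hW.measurable_uncurry_swap.const_mul 2).exp.mul
        (((hW.measurable_apply x).comp measurable_fst).const_mul r).exp)
      (hW.cont.mono fun ω hω => by fun_prop) (fun _ _ => by positivity),
    hW.lintegral_ofReal_expFunctional, ← lintegral_const_mul' _ _ ENNReal.ofReal_ne_top]
  exact setLIntegral_congr_fun measurableSet_Ioc fun w hw =>
    hW.lintegral_exp_mul_mul_exp_eq hw.1.le hw.2 2 r

theorem integrable_expFunctional_zero_mul_exp [SFinite P] (hW : IsBrownianMotion P W)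
    (x r : ℝ) : Integrable (fun ω => expFunctional W 0 x ω * Real.exp (r * W x ω)) P := by
  have hm : Measurable fun ω => expFunctional W 0 x ω * Real.exp (r * W x ω) :=
    (hW.measurable_expFunctional 0 x).mul ((hW.measurable_apply x).const_mul r).exp
  refine (lintegral_ofReal_ne_top_iff_integrable hm.aestronglyMeasurable
    (ae_of_all _ fun ω => mul_nonneg (expFunctional_nonneg W 0 x ω) (Real.exp_nonneg _))).1 ?_
  rw [hW.lintegral_ofReal_expFunctional_zero_mul_exp]
  exact ENNReal.mul_ne_top ENNReal.ofReal_ne_top (hW.lintegral_ofReal_expFunctional_lt_top r x).ne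

theorem integral_expFunctional_zero_mul_exp [SFinite P] (hW : IsBrownianMotion P W) (x r : ℝ) :
    ∫ ω, expFunctional W 0 x ω * Real.exp (r * W x ω) ∂P
      = Real.exp (r ^ 2 * x / 2) * ∫ ω, expFunctional W r x ω ∂P := by
  rw [integral_eq_lintegral_of_nonneg_ae
      (ae_of_all _ fun ω => mul_nonneg (expFunctional_nonneg W 0 x ω) (Real.exp_nonneg _))
      (hW.integrable_expFunctional_zero_mul_exp x r).aestronglyMeasurable,
    integral_eq_lintegral_of_nonneg_ae (ae_of_all _ (expFunctional_nonneg W r x))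
      (hW.measurable_expFunctional r x).aestronglyMeasurable,
    hW.lintegral_ofReal_expFunctional_zero_mul_exp, ENNReal.toReal_mul,
    ENNReal.toReal_ofReal (Real.exp_nonneg _)]

end IsBrownianMotion

theorem bound_on_extension_L_general
    {Ω : Type*} [MeasurableSpace Ω] (P : Measure Ω) [IsProbabilityMeasure P]
    (W : ℝ → Ω → ℝ) (hW : IsBrownianMotion P W)
    (a x : ℝ) (ha : 0 < a) (ν : ℂ) :
    ‖Complex.exp (-(x : ℂ) * ν ^ 2 / 2) *
        ∫ ω, ((max ((∫ w in Set.Ioc (0:ℝ) x, Real.exp (2 * W w ω)) - a) 0 : ℝ) : ℂ) *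
          Complex.exp (ν * (W x ω : ℂ)) ∂P‖
      ≤ Real.exp ((x / 2) * ν.im ^ 2) *
          ∫ ω, (∫ w in Set.Ioc (0:ℝ) x, Real.exp (2 * (W w ω + ν.re * w))) ∂P := by
  have hA : ∀ ω, ∫ w in Set.Ioc (0:ℝ) x, Real.exp (2 * W w ω) = expFunctional W 0 x ω :=
    fun ω => by simp [expFunctional]
  have hintegrand : ∀ ω, ‖((max (expFunctional W 0 x ω - a) 0 : ℝ) : ℂ)
      * Complex.exp (ν * (W x ω : ℂ))‖ ≤ expFunctional W 0 x ω * Real.exp (ν.re * W x ω) := by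
    intro ω
    rw [norm_mul, Complex.norm_real, Real.norm_of_nonneg (le_max_right _ _), Complex.norm_exp,
      Complex.re_mul_ofReal]
    have hA0 := expFunctional_nonneg W 0 x ω
    gcongr
    exact max_le (by linarith) hA0
  simp_rw [hA]
  calc
    _ = Real.exp ((x / 2) * ν.im ^ 2 - ν.re ^ 2 * x / 2)
        * ‖∫ ω, ((max (expFunctional W 0 x ω - a) 0 : ℝ) : ℂ)
            * Complex.exp (ν * (W x ω : ℂ)) ∂P‖ := by
      rw [norm_mul, norm_exp_neg_mul_sq_div_two]
    _ ≤ Real.exp ((x / 2) * ν.im ^ 2 - ν.re ^ 2 * x / 2)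
        * ∫ ω, expFunctional W 0 x ω * Real.exp (ν.re * W x ω) ∂P := by
      gcongr
      exact norm_integral_le_of_norm_le (hW.integrable_expFunctional_zero_mul_exp x ν.re)
        (ae_of_all _ hintegrand)
    _ = Real.exp ((x / 2) * ν.im ^ 2) * ∫ ω, expFunctional W ν.re x ω ∂P := by
      rw [hW.integral_expFunctional_zero_mul_exp, ← mul_assoc, ← Real.exp_add, sub_add_cancel]

theorem bound_on_extension_L
    {Ω : Type*} [MeasurableSpace Ω] (P : Measure Ω) [IsProbabilityMeasure P]
    (W : ℝ → Ω → ℝ) (hW : IsBrownianMotion P W)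
    (a x : ℝ) (ha : 0 < a) (hx : 0 < x) (ν : ℂ) :
    ‖Complex.exp (-(x : ℂ) * ν ^ 2 / 2) *
        ∫ ω, ((max ((∫ w in Set.Ioc (0:ℝ) x, Real.exp (2 * W w ω)) - a) 0 : ℝ) : ℂ) *
          Complex.exp (ν * (W x ω : ℂ)) ∂P‖
      ≤ Real.exp ((x / 2) * ν.im ^ 2) *
          ∫ ω, (∫ w in Set.Ioc (0:ℝ) x, Real.exp (2 * (W w ω + ν.re * w))) ∂P :=
  bound_on_extension_L_general P W hW a x ha ν
end
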